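/- Let F be an n×n Hermitian complex matrix. Then exp(F²) = (4π)^(−1/2) ∫_ℝ e^(−k²/4) · exp(k·F) dk, where the integral is the Bochner integral of the matrix-valued function k ↦ e^(−k²/4)·exp(k F). -/

import Mathlib

/-!
Diagonalize `F = U D U*` with `D` real diagonal. Both sides of the identity commute with the
algebra automorphism `A ↦ U A U*` (the exponential because it is a power series, the integral
because the automorphism is a continuous linear equivalence), and on diagonal matrices the
identity is, entry by entry, the scalar Gaussian integral
`∫ e^(-k²/4 + k z) dk = √(4π) e^(z²)`, valid for every complex `z`.
-/

open MeasureTheory Matrix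

attribute [local instance] Matrix.normedAddCommGroup Matrix.normedSpace

namespace Complex

theorem exp_neg_sq_div_four_smul_exp (z : ℂ) (k : ℝ) :
    Real.exp (-k ^ 2 / 4) • exp (k * z) = exp (-(1 / 4) * k ^ 2 + z * k + 0) := by
  rw [real_smul, ofReal_exp, ← exp_add]
  push_cast
  ring_nf

theorem integrable_exp_neg_sq_div_four_smul_exp (z : ℂ) :
    Integrable fun k : ℝ => Real.exp (-k ^ 2 / 4) • exp (k * z) := by
  simpa only [exp_neg_sq_div_four_smul_exp] using
    integrable_cexp_quadratic (b := 1 / 4) (by norm_num) z 0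

theorem gaussian_integral_exp_mul (z : ℂ) :
    (4 * Real.pi) ^ (-(1 / 2 : ℝ)) • ∫ k : ℝ, Real.exp (-k ^ 2 / 4) • exp (k * z) =
      exp (z ^ 2) := by
  have hpi : 0 < 4 * Real.pi := by positivity
  have hsqrt : (Real.pi / -(-(1 / 4)) : ℂ) ^ (1 / 2 : ℂ) = ((4 * Real.pi) ^ (1 / 2 : ℝ) : ℝ) := by
    rw [ofReal_cpow hpi.le]
    push_cast
    ring_nf
  simp_rw [exp_neg_sq_div_four_smul_exp]
  rw [integral_cexp_quadratic (by norm_num) z 0, hsqrt, ← smul_mul_assoc, real_smul,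
    ← ofReal_mul, ← Real.rpow_add hpi]
  norm_num [div_neg]

end Complex

namespace Matrix

variable {ι : Type*} [Fintype ι] [DecidableEq ι]

theorem integral_diagonal {X : Type*} [MeasurableSpace X] {μ : Measure X} (f : X → ι → ℂ) :
    ∫ x, diagonal (f x) ∂μ = diagonal (∫ x, f x ∂μ) :=
  (⟨diagonalLinearMap ι ℂ ℂ, norm_diagonal⟩ : (ι → ℂ) →ₗᵢ[ℂ] Matrix ι ι ℂ).integral_comp_comm f

theorem integral_algEquiv_apply {X : Type*} [MeasurableSpace X] {μ : Measure X}
    (φ : Matrix ι ι ℂ ≃ₐ[ℂ] Matrix ι ι ℂ) (f : X → Matrix ι ι ℂ) :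
    ∫ x, φ (f x) ∂μ = φ (∫ x, f x ∂μ) :=
  (φ.toLinearEquiv.restrictScalars ℝ).toContinuousLinearEquiv.integral_comp_comm f

theorem map_exp_algEquiv (φ : Matrix ι ι ℂ ≃ₐ[ℂ] Matrix ι ι ℂ) (A : Matrix ι ι ℂ) :
    φ (NormedSpace.exp A) = NormedSpace.exp (φ A) := by
  -- `NormedSpace.map_exp` wants a normed ring; the operator norm gives one with the same topology.
  open scoped Norms.Operator in
  exact NormedSpace.map_exp φ φ.toLinearMap.continuous_of_finiteDimensional A

theorem exp_diagonal_complex (d : ι → ℂ) :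
    NormedSpace.exp (diagonal d) = diagonal fun i => Complex.exp (d i) := by
  rw [exp_diagonal, Pi.exp_def, Complex.exp_eq_exp_ℂ]

/-- The expectation of `exp (X • A)` for a centred Gaussian `X` of variance `2`. -/
noncomputable def gaussianAverageExp (A : Matrix ι ι ℂ) : Matrix ι ι ℂ :=
  (4 * Real.pi) ^ (-(1 / 2 : ℝ)) •
    ∫ k : ℝ, Real.exp (-k ^ 2 / 4) • NormedSpace.exp ((k : ℂ) • A)

theorem gaussianAverageExp_algEquiv (φ : Matrix ι ι ℂ ≃ₐ[ℂ] Matrix ι ι ℂ) (A : Matrix ι ι ℂ) :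
    gaussianAverageExp (φ A) = φ (gaussianAverageExp A) := by
  simp_rw [gaussianAverageExp, ← map_smul, ← map_exp_algEquiv,
    ← LinearMapClass.map_smul_of_tower φ, integral_algEquiv_apply]
  rw [LinearMapClass.map_smul_of_tower]

theorem gaussianAverageExp_diagonal (d : ι → ℂ) :
    gaussianAverageExp (diagonal d) = NormedSpace.exp (diagonal d ^ 2) := by
  simp_rw [gaussianAverageExp, ← diagonal_smul, exp_diagonal_complex, ← diagonal_smul,
    integral_diagonal, ← diagonal_smul, diagonal_pow, exp_diagonal_complex]
  congr 1
  ext i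
  rw [Pi.smul_apply, eval_integral fun j => by
    simpa only [Pi.smul_apply, smul_eq_mul] using
      Complex.integrable_exp_neg_sq_div_four_smul_exp (d j)]
  exact Complex.gaussian_integral_exp_mul (d i)

end Matrix

/-- Gaussian integral formula for the exponential of the square of a
Hermitian matrix: `exp(F²) = (4π)^(−1/2) ∫ℝ e^(−k²/4) · exp(k F) dk`. -/
theorem exp_sq_eq_gaussian_integral {n : ℕ} (F : Matrix (Fin n) (Fin n) ℂ)
    (hF : F.IsHermitian) :
    NormedSpace.exp (F ^ 2) =
      ((4 * Real.pi) ^ (-(1 / 2 : ℝ))) •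
        ∫ k : ℝ, Real.exp (-k ^ 2 / 4) • NormedSpace.exp (((k : ℂ)) • F) := by
  obtain ⟨φ, d, hFd⟩ : ∃ (φ : Matrix (Fin n) (Fin n) ℂ ≃ₐ[ℂ] Matrix (Fin n) (Fin n) ℂ)
      (d : Fin n → ℂ), F = φ (diagonal d) :=
    ⟨(Unitary.conjStarAlgAut ℂ _ hF.eigenvectorUnitary).toAlgEquiv, _, hF.spectral_theorem⟩
  change _ = gaussianAverageExp F
  rw [hFd, gaussianAverageExp_algEquiv, gaussianAverageExp_diagonal, map_exp_algEquiv, map_pow]
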